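/- arXiv:2007.00292 — 3 statements merged into one kernel-verified Lean document; each statement's English description precedes it below -/
import Mathlib

section
/- Let (Z, μ) be a probability space, H a real Hilbert space, u : Z → ℝ measurable and v : Z → H strongly measurable, with ∫ u dμ = 0, ∫ |u| dμ < ∞, ∫ |u(z)|·‖v(z)‖ dμ(z) < ∞ and ∫ |u(z)|·‖v(z)‖² dμ(z) < ∞. Then −∫∫ u(z)·u(z')·‖v(z) − v(z')‖² dμ(z) dμ(z') = 2·‖∫ u(z)·v(z) dμ(z)‖², where the inner integral ∫ u·v dμ is a Bochner integral in H and the double integral is with respect to the product measure μ ⊗ μ. -/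
open MeasureTheory

/-- For a centered real random variable `u(Z)` and a Hilbert-space-valued random element
`v(Z)`, with independent copies modeled by the product measure,
`−E[u(Z)u(Z')‖v(Z) − v(Z')‖²] = 2‖E[u(Z)·v(Z)]‖²`. -/
theorem stmt_0 {Z : Type*} [MeasurableSpace Z] (μ : Measure Z) [IsProbabilityMeasure μ]
    {H : Type*} [NormedAddCommGroup H] [InnerProductSpace ℝ H] [CompleteSpace H]
    (u : Z → ℝ) (v : Z → H)
    (hu : Measurable u) (hv : StronglyMeasurable v)
    (hmean : ∫ z, u z ∂μ = 0)
    (hint1 : Integrable (fun z => |u z|) μ)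
    (hint2 : Integrable (fun z => |u z| * ‖v z‖) μ)
    (hint3 : Integrable (fun z => |u z| * ‖v z‖ ^ 2) μ) :
    -∫ q : Z × Z, u q.1 * u q.2 * ‖v q.1 - v q.2‖ ^ 2 ∂(μ.prod μ)
      = 2 * ‖∫ z, u z • v z ∂μ‖ ^ 2 := by
  set F : Z → H := fun z => u z • v z with hFdef
  set a : Z → ℝ := fun z => u z * ‖v z‖ ^ 2 with hadef
  have hFsm : StronglyMeasurable F := hu.stronglyMeasurable.smul hv
  have hu_int : Integrable u μ := by
    refine hint1.mono' hu.aestronglyMeasurable ?_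
    filter_upwards with z
    simp [Real.norm_eq_abs]
  have hF : Integrable F μ := by
    refine hint2.mono' hFsm.aestronglyMeasurable ?_
    filter_upwards with z
    simp [F, norm_smul]
  have ha : Integrable a μ := by
    refine hint3.mono' (hu.aestronglyMeasurable.mul
      ((hv.norm.pow 2).aestronglyMeasurable)) ?_
    filter_upwards with z
    simp [a, abs_mul, abs_of_nonneg (sq_nonneg ‖v z‖)]
  have I1 : Integrable (fun q : Z × Z => a q.1 * u q.2) (μ.prod μ) :=
    ha.mul_prod hu_int
  have I3 : Integrable (fun q : Z × Z => u q.1 * a q.2) (μ.prod μ) :=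
    hu_int.mul_prod ha
  have I2sm : AEStronglyMeasurable (fun q : Z × Z => @inner ℝ H _ (F q.1) (F q.2)) (μ.prod μ) :=
    ((hFsm.comp_measurable measurable_fst).inner
      (hFsm.comp_measurable measurable_snd)).aestronglyMeasurable
  have I2 : Integrable (fun q : Z × Z => @inner ℝ H _ (F q.1) (F q.2)) (μ.prod μ) := by
    refine (hF.norm.mul_prod hF.norm).mono' I2sm ?_
    filter_upwards with q
    simpa using abs_real_inner_le_norm (F q.1) (F q.2)
  have I2' : Integrable (fun q : Z × Z => 2 * @inner ℝ H _ (F q.1) (F q.2)) (μ.prod μ) :=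
    I2.const_mul 2
  have Isub : Integrable (fun q : Z × Z =>
      a q.1 * u q.2 - 2 * @inner ℝ H _ (F q.1) (F q.2)) (μ.prod μ) := I1.sub I2'
  have hpt : ∀ q : Z × Z, u q.1 * u q.2 * ‖v q.1 - v q.2‖ ^ 2
      = a q.1 * u q.2 - 2 * @inner ℝ H _ (F q.1) (F q.2)
        + u q.1 * a q.2 := by
    intro q
    have := @norm_sub_sq_real H _ _ (v q.1) (v q.2)
    simp only [F, a, real_inner_smul_left, real_inner_smul_right]
    rw [this]; ring
  have e1 : (∫ q : Z × Z, a q.1 * u q.2 ∂(μ.prod μ)) = 0 := by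
    rw [integral_prod_mul, hmean, mul_zero]
  have e3 : (∫ q : Z × Z, u q.1 * a q.2 ∂(μ.prod μ)) = 0 := by
    rw [integral_prod_mul, hmean, zero_mul]
  have e2 : (∫ q : Z × Z, @inner ℝ H _ (F q.1) (F q.2) ∂(μ.prod μ))
      = ‖∫ z, F z ∂μ‖ ^ 2 := by
    rw [MeasureTheory.integral_prod _ I2]
    have h1 : ∀ x, (∫ y, @inner ℝ H _ (F x) (F y) ∂μ) = @inner ℝ H _ (F x) (∫ z, F z ∂μ) :=
      fun x => integral_inner hF (F x)
    simp only [h1]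
    have h2 : (∫ x, @inner ℝ H _ (F x) (∫ z, F z ∂μ) ∂μ)
        = @inner ℝ H _ (∫ z, F z ∂μ) (∫ z, F z ∂μ) := by
      rw [show (fun x => @inner ℝ H _ (F x) (∫ z, F z ∂μ))
          = fun x => @inner ℝ H _ (∫ z, F z ∂μ) (F x) from
        funext fun x => real_inner_comm _ _]
      exact integral_inner hF _
    rw [h2, real_inner_self_eq_norm_sq]
  calc -∫ q : Z × Z, u q.1 * u q.2 * ‖v q.1 - v q.2‖ ^ 2 ∂(μ.prod μ)
      = -∫ q : Z × Z, (a q.1 * u q.2 - 2 * @inner ℝ H _ (F q.1) (F q.2)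
          + u q.1 * a q.2) ∂(μ.prod μ) := by
        simp only [hpt]
    _ = -((∫ q : Z × Z, a q.1 * u q.2 ∂(μ.prod μ))
          - 2 * (∫ q : Z × Z, @inner ℝ H _ (F q.1) (F q.2) ∂(μ.prod μ))
          + ∫ q : Z × Z, u q.1 * a q.2 ∂(μ.prod μ)) := by
        rw [integral_add Isub I3, integral_sub I1 I2', MeasureTheory.integral_const_mul]
    _ = 2 * ‖∫ z, F z ∂μ‖ ^ 2 := by
        rw [e1, e2, e3]; ring
end

section
/- Let (Ω₀, 𝔉, μ) be a probability space, H a real separable Hilbert space, ψ : Ω₀ → H strongly measurable with E‖ψ‖² < ∞, and Y : Ω₀ → Ω Borel measurable into a metric space (Ω, d) with ∫∫ d(Y(ω), Y(ω'))² d(μ⊗μ) < ∞. Set μ_ψ = E[ψ] (Bochner integral), η = ψ − μ_ψ, and for u, v ∈ H let u ⊗ v denote the rank-one bounded operator h ↦ ⟨v, h⟩·u on H. Then the function (ω, ω') ↦ (η(ω) ⊗ η(ω'))·d(Y(ω), Y(ω')) is Bochner integrable with respect to μ ⊗ μ in the Banach space of bounded operators on H, and the operator Λ = −∫∫ (η(ω)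 ⊗ η(ω'))·d(Y(ω), Y(ω')) d(μ⊗μ) satisfies the operator-norm bound ‖Λ‖ ≤ (E‖η‖²)·(E[d(Y, Y')²])^{1/2}; in particular Λ is a bounded linear operator. -/
/-!
The rank-one kernel `(ω, ω') ↦ η(ω) ⊗ η(ω')` has pointwise norm `‖η(ω)‖ ‖η(ω')‖`, so it lies in
`L²(μ ⊗ μ)` with `L²` norm `E‖η‖²`. The weight `d(Y, Y')` is in `L²(μ ⊗ μ)` as well, so the
Cauchy–Schwarz inequality makes their product Bochner integrable and bounds the norm of its
integral by the product of the two `L²` norms.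
-/

open MeasureTheory InnerProductSpace

theorem InnerProductSpace.continuous_rankOne {E F : Type*} [NormedAddCommGroup E]
    [NormedSpace ℝ E] [NormedAddCommGroup F] [InnerProductSpace ℝ F] :
    Continuous fun p : E × F => rankOne ℝ p.1 p.2 :=
  (ContinuousLinearMap.smulRightL ℝ F E).continuous₂.comp
    (((innerSL ℝ).continuous.comp continuous_snd).prodMk continuous_fst)

namespace MeasureTheory

section HolderSMul

variable {α E : Type*} [MeasurableSpace α] {μ : Measure α} [NormedAddCommGroup E]
  [NormedSpace ℝ E] {f : α → ℝ} {G : α → E}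

theorem memLp_two_of_nonneg_of_integrable_sq (hf : 0 ≤ f)
    (h : Integrable (fun x => f x ^ 2) μ) : MemLp f 2 μ := by
  have hmeas : AEStronglyMeasurable f μ := by
    simpa [Real.sqrt_sq (hf _)] using Real.continuous_sqrt.comp_aestronglyMeasurable h.1
  exact (memLp_two_iff_integrable_sq hmeas).2 h

theorem MemLp.integrable_smul_of_two (hf : MemLp f 2 μ) (hG : MemLp G 2 μ) :
    Integrable (fun x => f x • G x) μ :=
  memLp_one_iff_integrable.1 (hG.smul hf)

theorem MemLp.norm_integral_smul_le_of_two (hf : MemLp f 2 μ) (hG : MemLp G 2 μ) :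
    ‖∫ x, f x • G x ∂μ‖ ≤ √(∫ x, f x ^ 2 ∂μ) * √(∫ x, ‖G x‖ ^ 2 ∂μ) := by
  have hCS := integral_mul_norm_le_Lp_mul_Lq Real.HolderConjugate.two_two
    (ENNReal.ofReal_ofNat 2 ▸ hf.norm) (ENNReal.ofReal_ofNat 2 ▸ hG.norm)
  simp only [Real.rpow_two, ← Real.sqrt_eq_rpow, Real.norm_eq_abs, sq_abs, abs_abs,
    abs_norm] at hCS
  calc ‖∫ x, f x • G x ∂μ‖ ≤ ∫ x, ‖f x • G x‖ ∂μ := norm_integral_le_integral_norm _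
    _ = ∫ x, |f x| * ‖G x‖ ∂μ := by simp only [norm_smul, Real.norm_eq_abs]
    _ ≤ _ := hCS

end HolderSMul

section RankOneKernel

variable {α β E F : Type*} [MeasurableSpace α] [MeasurableSpace β] {μ : Measure α}
  {ν : Measure β} [NormedAddCommGroup E] [NormedSpace ℝ E] [NormedAddCommGroup F]
  [InnerProductSpace ℝ F] {g : α → E} {h : β → F}

theorem MemLp.rankOne_prod (hg : MemLp g 2 μ) (hh : MemLp h 2 ν) :
    MemLp (fun q : α × β => rankOne ℝ (g q.1) (h q.2)) 2 (μ.prod ν) := by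
  have hmeas : AEStronglyMeasurable (fun q : α × β => rankOne ℝ (g q.1) (h q.2)) (μ.prod ν) :=
    continuous_rankOne.comp_aestronglyMeasurable (f := fun q : α × β => (g q.1, h q.2))
      (hg.1.comp_fst.prodMk hh.1.comp_snd)
  refine (memLp_two_iff_integrable_sq_norm hmeas).2 ?_
  simpa only [norm_rankOne, mul_pow] using
    (hg.integrable_norm_pow two_ne_zero).mul_prod (hh.integrable_norm_pow two_ne_zero)

theorem integral_norm_rankOne_sq_prod [SFinite μ] [SFinite ν] :
    ∫ q : α × β, ‖rankOne ℝ (g q.1) (h q.2)‖ ^ 2 ∂(μ.prod ν)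
      = (∫ x, ‖g x‖ ^ 2 ∂μ) * ∫ y, ‖h y‖ ^ 2 ∂ν := by
  simp only [norm_rankOne, mul_pow]
  exact integral_prod_mul (fun x => ‖g x‖ ^ 2) (fun y => ‖h y‖ ^ 2)

end RankOneKernel

end MeasureTheory

theorem stmt_2_general {Ω₀ : Type*} [MeasurableSpace Ω₀] (μ : Measure Ω₀) [IsProbabilityMeasure μ]
    {H : Type*} [NormedAddCommGroup H] [InnerProductSpace ℝ H]
    {Ω : Type*} [MetricSpace Ω]
    (ψ : Ω₀ → H) (Y : Ω₀ → Ω)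
    (hψ : StronglyMeasurable ψ)
    (hψ2 : Integrable (fun ω => ‖ψ ω‖ ^ 2) μ)
    (hd2 : Integrable (fun q : Ω₀ × Ω₀ => dist (Y q.1) (Y q.2) ^ 2) (μ.prod μ))
    (η : Ω₀ → H) (hη : η = fun ω => ψ ω - ∫ ω', ψ ω' ∂μ) :
    Integrable (fun q : Ω₀ × Ω₀ =>
        dist (Y q.1) (Y q.2) • ((innerSL ℝ (η q.2)).smulRight (η q.1))) (μ.prod μ) ∧
      ‖-∫ q : Ω₀ × Ω₀,
            dist (Y q.1) (Y q.2) • ((innerSL ℝ (η q.2)).smulRight (η q.1)) ∂(μ.prod μ)‖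
        ≤ (∫ ω, ‖η ω‖ ^ 2 ∂μ) *
            Real.sqrt (∫ q : Ω₀ × Ω₀, dist (Y q.1) (Y q.2) ^ 2 ∂(μ.prod μ)) := by
  have hη2 : MemLp η 2 μ := hη ▸
    ((memLp_two_iff_integrable_sq_norm hψ.aestronglyMeasurable).2 hψ2).sub (memLp_const _)
  have hd : MemLp (fun q : Ω₀ × Ω₀ => dist (Y q.1) (Y q.2)) 2 (μ.prod μ) :=
    memLp_two_of_nonneg_of_integrable_sq (fun _ => dist_nonneg) hd2
  -- By `rankOne_def` the integrand is `dist (Y q.1) (Y q.2) • rankOne ℝ (η q.1) (η q.2)`.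
  have hK := hη2.rankOne_prod hη2
  refine ⟨hd.integrable_smul_of_two hK, ?_⟩
  calc _ ≤ √(∫ q : Ω₀ × Ω₀, dist (Y q.1) (Y q.2) ^ 2 ∂(μ.prod μ))
        * √(∫ q : Ω₀ × Ω₀, ‖rankOne ℝ (η q.1) (η q.2)‖ ^ 2 ∂(μ.prod μ)) :=
        (norm_neg _).trans_le (hd.norm_integral_smul_le_of_two hK)
    _ = _ := by
      rw [integral_norm_rankOne_sq_prod, ← sq,
        Real.sqrt_sq (integral_nonneg fun _ => by positivity), mul_comm]

/-- The weighted inverse regression ensemble operator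
`Λ = −E[(η ⊗ η')·d(Y, Y')]` (with `η = ψ − E ψ` a centered Hilbert-space feature and
`u ⊗ v : h ↦ ⟨v, h⟩ • u` a rank-one operator) is given by a Bochner integral in the Banach
space of bounded operators, and satisfies `‖Λ‖ ≤ (E‖η‖²)·(E[d(Y,Y')²])^{1/2}`. -/
theorem stmt_2 {Ω₀ : Type*} [MeasurableSpace Ω₀] (μ : Measure Ω₀) [IsProbabilityMeasure μ]
    {H : Type*} [NormedAddCommGroup H] [InnerProductSpace ℝ H] [CompleteSpace H]
    [SecondCountableTopology H]
    {Ω : Type*} [MetricSpace Ω] [MeasurableSpace Ω] [BorelSpace Ω]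
    (ψ : Ω₀ → H) (Y : Ω₀ → Ω)
    (hψ : StronglyMeasurable ψ) (hY : Measurable Y)
    (hψ2 : Integrable (fun ω => ‖ψ ω‖ ^ 2) μ)
    (hd2 : Integrable (fun q : Ω₀ × Ω₀ => dist (Y q.1) (Y q.2) ^ 2) (μ.prod μ))
    (η : Ω₀ → H) (hη : η = fun ω => ψ ω - ∫ ω', ψ ω' ∂μ) :
    Integrable (fun q : Ω₀ × Ω₀ =>
        dist (Y q.1) (Y q.2) • ((innerSL ℝ (η q.2)).smulRight (η q.1))) (μ.prod μ) ∧
      ‖-∫ q : Ω₀ × Ω₀,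
            dist (Y q.1) (Y q.2) • ((innerSL ℝ (η q.2)).smulRight (η q.1)) ∂(μ.prod μ)‖
        ≤ (∫ ω, ‖η ω‖ ^ 2 ∂μ) *
            Real.sqrt (∫ q : Ω₀ × Ω₀, dist (Y q.1) (Y q.2) ^ 2 ∂(μ.prod μ)) :=
  stmt_2_general μ ψ Y hψ hψ2 hd2 η hη
end

section
/- Fix p ≥ 1, a matrix norm ‖·‖ on p × p real matrices that is submultiplicative, an invertible matrix Σ ∈ ℝ^{p×p}, and matrices Λ, Σ̂, Λ̂ ∈ ℝ^{p×p}. Suppose ‖Σ̂ − Σ‖ ≤ 1/(2‖Σ⁻¹‖). Then Σ̂ is invertible and ‖ Σ̂⁻¹Λ̂ − Σ⁻¹Λ + Σ⁻¹(Σ̂ − Σ)Σ⁻¹Λ − Σ⁻¹(Λ̂ − Λ) ‖ ≤ 2‖Σ⁻¹‖³·‖Λ‖·‖Σ̂ − Σ‖² + 2‖Σ⁻¹‖²·‖Σ̂ − Σ‖·‖Λ̂ − Λ‖. -/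
/-!
Write `E = Σ̂ - Σ`. The resolvent identity `Σ⁻¹ - Σ̂⁻¹ = Σ⁻¹ E Σ̂⁻¹` gives
`‖Σ̂⁻¹‖ ≤ ‖Σ⁻¹‖ + ‖Σ⁻¹‖‖E‖‖Σ̂⁻¹‖ ≤ ‖Σ⁻¹‖ + ‖Σ̂⁻¹‖ / 2`, so `‖Σ̂⁻¹‖ ≤ 2‖Σ⁻¹‖` and
`‖Σ̂⁻¹ - Σ⁻¹‖ ≤ 2‖Σ⁻¹‖²‖E‖`. The same identity factors the remainder of the first-order
expansion as `(Σ̂⁻¹ - Σ⁻¹)(Λ̂ - Λ - EΣ⁻¹Λ)`, which yields the bound. Invertibility of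
`Σ̂ = Σ(1 + Σ⁻¹E)` holds because `‖Σ⁻¹E‖ < 1` forbids `(1 + Σ⁻¹E)P = 0` for `P ≠ 0`,
as then `P = -Σ⁻¹EP` would have norm at most `‖Σ⁻¹E‖‖P‖ < ‖P‖`.
-/

open Matrix
open scoped Ring

namespace Ring

variable {R : Type*} [Ring R]

/-- The error at `(b, d)` of the first-order expansion of `(a, c) ↦ a⁻¹ c` around `(a, c)`. -/
noncomputable def inverseMulRemainder (a b c d : R) : R :=
  b⁻¹ʳ * d - a⁻¹ʳ * c + a⁻¹ʳ * (b - a) * a⁻¹ʳ * c - a⁻¹ʳ * (d - c)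

theorem inverseMulRemainder_eq {a b : R} (ha : IsUnit a) (hb : IsUnit b) (c d : R) :
    inverseMulRemainder a b c d = (b⁻¹ʳ - a⁻¹ʳ) * (d - c - (b - a) * a⁻¹ʳ * c) := by
  have hres : b⁻¹ʳ - a⁻¹ʳ = b⁻¹ʳ * (a - b) * a⁻¹ʳ := inverse_sub_inverse (iff_of_true hb ha)
  rw [← sub_eq_zero]
  calc inverseMulRemainder a b c d - (b⁻¹ʳ - a⁻¹ʳ) * (d - c - (b - a) * a⁻¹ʳ * c)
      = (b⁻¹ʳ - a⁻¹ʳ - b⁻¹ʳ * (a - b) * a⁻¹ʳ) * c := by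
        unfold inverseMulRemainder; noncomm_ring
    _ = 0 := by rw [hres, sub_self, zero_mul]

end Ring

section RingSeminormClass

variable {F R : Type*} [Ring R] [FunLike F R ℝ] [RingSeminormClass F R ℝ] (f : F)

theorem map_mul_mul_le (x y z : R) : f (x * y * z) ≤ f x * f y * f z :=
  (map_mul_le_mul f _ _).trans <|
    mul_le_mul_of_nonneg_right (map_mul_le_mul f _ _) (apply_nonneg f z)

variable {a b : R}

theorem map_inverse_le_two_mul (ha : IsUnit a) (hb : IsUnit b)
    (hsmall : f a⁻¹ʳ * f (b - a) ≤ 1 / 2) : f b⁻¹ʳ ≤ 2 * f a⁻¹ʳ := by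
  have hres : a⁻¹ʳ - b⁻¹ʳ = a⁻¹ʳ * (b - a) * b⁻¹ʳ := Ring.inverse_sub_inverse (iff_of_true ha hb)
  have h : f b⁻¹ʳ ≤ f a⁻¹ʳ + f a⁻¹ʳ * f (b - a) * f b⁻¹ʳ :=
    calc f b⁻¹ʳ = f (a⁻¹ʳ - a⁻¹ʳ * (b - a) * b⁻¹ʳ) := by rw [← hres, sub_sub_cancel]
      _ ≤ f a⁻¹ʳ + f (a⁻¹ʳ * (b - a) * b⁻¹ʳ) := map_sub_le_add f _ _
      _ ≤ f a⁻¹ʳ + f a⁻¹ʳ * f (b - a) * f b⁻¹ʳ := add_le_add_right (map_mul_mul_le f _ _ _) _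
  nlinarith [apply_nonneg f b⁻¹ʳ]

theorem map_inverse_sub_inverse_le (ha : IsUnit a) (hb : IsUnit b)
    (hsmall : f a⁻¹ʳ * f (b - a) ≤ 1 / 2) : f (b⁻¹ʳ - a⁻¹ʳ) ≤ 2 * f a⁻¹ʳ ^ 2 * f (b - a) :=
  calc f (b⁻¹ʳ - a⁻¹ʳ) = f (a⁻¹ʳ * (b - a) * b⁻¹ʳ) := by
        rw [map_sub_rev, Ring.inverse_sub_inverse (iff_of_true ha hb)]
    _ ≤ f a⁻¹ʳ * f (b - a) * f b⁻¹ʳ := map_mul_mul_le f _ _ _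
    _ ≤ f a⁻¹ʳ * f (b - a) * (2 * f a⁻¹ʳ) :=
        mul_le_mul_of_nonneg_left (map_inverse_le_two_mul f ha hb hsmall)
          (mul_nonneg (apply_nonneg f _) (apply_nonneg f _))
    _ = 2 * f a⁻¹ʳ ^ 2 * f (b - a) := by ring

theorem map_inverseMulRemainder_le (ha : IsUnit a) (hb : IsUnit b)
    (hsmall : f a⁻¹ʳ * f (b - a) ≤ 1 / 2) (c d : R) :
    f (Ring.inverseMulRemainder a b c d)
      ≤ 2 * f a⁻¹ʳ ^ 3 * f c * f (b - a) ^ 2 + 2 * f a⁻¹ʳ ^ 2 * f (b - a) * f (d - c) := by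
  have hlin : f (d - c - (b - a) * a⁻¹ʳ * c) ≤ f (d - c) + f (b - a) * f a⁻¹ʳ * f c :=
    (map_sub_le_add f _ _).trans (add_le_add_right (map_mul_mul_le f _ _ _) _)
  calc f (Ring.inverseMulRemainder a b c d)
      ≤ f (b⁻¹ʳ - a⁻¹ʳ) * f (d - c - (b - a) * a⁻¹ʳ * c) := by
        rw [Ring.inverseMulRemainder_eq ha hb]; exact map_mul_le_mul f _ _
    _ ≤ 2 * f a⁻¹ʳ ^ 2 * f (b - a) * (f (d - c) + f (b - a) * f a⁻¹ʳ * f c) :=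
        mul_le_mul (map_inverse_sub_inverse_le f ha hb hsmall) hlin (apply_nonneg f _)
          (by have := apply_nonneg f (b - a); positivity)
    _ = 2 * f a⁻¹ʳ ^ 3 * f c * f (b - a) ^ 2 + 2 * f a⁻¹ʳ ^ 2 * f (b - a) * f (d - c) := by
        ring

end RingSeminormClass

theorem isLeftRegular_one_add_of_map_lt_one {F R : Type*} [Ring R] [FunLike F R ℝ]
    [RingNormClass F R ℝ] (f : F) {x : R} (hx : f x < 1) : IsLeftRegular (1 + x) := by
  refine isLeftRegular_iff_right_eq_zero_of_mul.2 fun y hy => ?_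
  have hy' : -(x * y) = y := neg_eq_of_add_eq_zero_left (by rwa [add_mul, one_mul] at hy)
  have hle : f y ≤ f x * f y := by
    calc f y = f (-(x * y)) := by rw [hy']
      _ = f (x * y) := map_neg_eq_map f _
      _ ≤ f x * f y := map_mul_le_mul f x y
  have hzero : f y = 0 := by nlinarith [apply_nonneg f y]
  exact (map_eq_zero_iff_eq_zero f).1 hzero

theorem Matrix.isUnit_of_map_inverse_mul_sub_lt_one {n K F : Type*} [Fintype n] [DecidableEq n]
    [Field K] [FunLike F (Matrix n n K) ℝ] [RingNormClass F (Matrix n n K) ℝ] (f : F)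
    {a b : Matrix n n K} (ha : IsUnit a) (hsmall : f (a⁻¹ʳ * (b - a)) < 1) : IsUnit b := by
  have hfactor : b = a * (1 + a⁻¹ʳ * (b - a)) := by
    rw [mul_add, mul_one, ← mul_assoc, Ring.mul_inverse_cancel a ha, one_mul, add_sub_cancel]
  rw [hfactor]
  exact ha.mul <| mulVec_injective_iff_isUnit.1 <| isLeftRegular_iff_mulVec_injective.1 <|
    isLeftRegular_one_add_of_map_lt_one f hsmall

theorem stmt_16_general {p : ℕ}
    (N : Matrix (Fin p) (Fin p) ℝ → ℝ)
    (hN0 : ∀ A, N A = 0 ↔ A = 0)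
    (hNadd : ∀ A B, N (A + B) ≤ N A + N B)
    (hNsmul : ∀ (c : ℝ) (A), N (c • A) = |c| * N A)
    (hNmul : ∀ A B, N (A * B) ≤ N A * N B)
    (S L Shat Lhat : Matrix (Fin p) (Fin p) ℝ)
    (hS : IsUnit S)
    (hclose : N (Shat - S) ≤ 1 / (2 * N S⁻¹)) :
    IsUnit Shat ∧
      N (Shat⁻¹ * Lhat - S⁻¹ * L + S⁻¹ * (Shat - S) * S⁻¹ * L - S⁻¹ * (Lhat - L))
        ≤ 2 * N S⁻¹ ^ 3 * N L * N (Shat - S) ^ 2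
          + 2 * N S⁻¹ ^ 2 * N (Shat - S) * N (Lhat - L) := by
  let f : RingNorm (Matrix (Fin p) (Fin p) ℝ) :=
    { toFun := N
      map_zero' := (hN0 0).2 rfl
      add_le' := hNadd
      neg' := fun A => by simpa using hNsmul (-1) A
      mul_le' := hNmul
      eq_zero_of_map_eq_zero' := fun A => (hN0 A).1 }
  simp only [nonsing_inv_eq_ringInverse] at hclose ⊢
  have hsmall : f S⁻¹ʳ * f (Shat - S) ≤ 1 / 2 := by
    rcases (apply_nonneg f S⁻¹ʳ).eq_or_lt with hzero | hpos
    · rw [← hzero, zero_mul]; norm_num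
    · calc f S⁻¹ʳ * f (Shat - S) ≤ f S⁻¹ʳ * (1 / (2 * f S⁻¹ʳ)) :=
            mul_le_mul_of_nonneg_left hclose hpos.le
        _ = 1 / 2 := by field_simp
  have hShat : IsUnit Shat := isUnit_of_map_inverse_mul_sub_lt_one f hS <|
    (map_mul_le_mul f _ _).trans_lt (hsmall.trans_lt (by norm_num))
  exact ⟨hShat, map_inverseMulRemainder_le f hS hShat hsmall L Lhat⟩

/-- Deterministic second-order perturbation bound for `Σ̂⁻¹Λ̂` around `Σ⁻¹Λ`, for any
submultiplicative matrix norm `N`: if `N(Σ̂ − Σ) ≤ 1/(2 N(Σ⁻¹))` then `Σ̂` is invertible and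
`N(Σ̂⁻¹Λ̂ − Σ⁻¹Λ + Σ⁻¹(Σ̂−Σ)Σ⁻¹Λ − Σ⁻¹(Λ̂−Λ))
  ≤ 2 N(Σ⁻¹)³ N(Λ) N(Σ̂−Σ)² + 2 N(Σ⁻¹)² N(Σ̂−Σ) N(Λ̂−Λ)`. -/
theorem stmt_16 {p : ℕ} (hp : 1 ≤ p)
    (N : Matrix (Fin p) (Fin p) ℝ → ℝ)
    (hN0 : ∀ A, N A = 0 ↔ A = 0)
    (hNneg : ∀ A, 0 ≤ N A)
    (hNadd : ∀ A B, N (A + B) ≤ N A + N B)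
    (hNsmul : ∀ (c : ℝ) (A), N (c • A) = |c| * N A)
    (hNmul : ∀ A B, N (A * B) ≤ N A * N B)
    (S L Shat Lhat : Matrix (Fin p) (Fin p) ℝ)
    (hS : IsUnit S)
    (hclose : N (Shat - S) ≤ 1 / (2 * N S⁻¹)) :
    IsUnit Shat ∧
      N (Shat⁻¹ * Lhat - S⁻¹ * L + S⁻¹ * (Shat - S) * S⁻¹ * L - S⁻¹ * (Lhat - L))
        ≤ 2 * N S⁻¹ ^ 3 * N L * N (Shat - S) ^ 2
          + 2 * N S⁻¹ ^ 2 * N (Shat - S) * N (Lhat - L) :=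
  stmt_16_general N hN0 hNadd hNsmul hNmul S L Shat Lhat hS hclose
end
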